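/- Shifting identity: let G be a k-uniform hypergraph, F a set of r edges each containing a vertex u, and v a vertex with v ∉ e for every e ∈ F. Let G' be obtained by replacing each e ∈ F with (e∖{u})∪{v}. Then for every real function f on V, ⟨L_{G'} f, f⟩ - ⟨L_G f, f⟩ = (1/(k-1)) · Σ_{e∈F} Σ_{w∈e∖{u}} (f(v) - f(u))(f(v) + f(u) - 2 f(w)). -/

import Mathlib

open Finset

variable {V : Type*} [Fintype V] [DecidableEq V]

/-- The degree of a vertex: the number of edges containing it. -/
def deg (E : Finset (Finset V)) (v : V) : ℕ := (E.filter (fun e => v ∈ e)).card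

/-- The adjacency matrix of a hypergraph. -/
noncomputable def adjMat (E : Finset (Finset V)) (i j : V) : ℝ :=
  if i ≠ j then ∑ e ∈ E.filter (fun e => i ∈ e ∧ j ∈ e), (1 : ℝ) / ((e.card : ℝ) - 1) else 0

/-- The Laplacian L = D - A applied to a function. -/
noncomputable def lap (E : Finset (Finset V)) (f : V → ℝ) (i : V) : ℝ :=
  (deg E i : ℝ) * f i - ∑ j, adjMat E i j * f j

/-- The Laplacian quadratic form ⟨Lf, f⟩. -/
noncomputable def lapForm (E : Finset (Finset V)) (f : V → ℝ) : ℝ :=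
  ∑ i, lap E f i * f i

/-- Two vertices are adjacent if they are distinct and share an edge. -/
def HAdj (E : Finset (Finset V)) (u v : V) : Prop :=
  u ≠ v ∧ ∃ e ∈ E, u ∈ e ∧ v ∈ e

/-- A hypergraph is connected if any two vertices are joined by a path. -/
def HyperConnected (E : Finset (Finset V)) : Prop :=
  ∀ u v : V, Relation.ReflTransGen (HAdj E) u v

/-- A cycle: distinct vertices u_1,…,u_p and distinct edges e_1,…,e_p (p ≥ 2)
with u_i, u_{i+1} ∈ e_i cyclically. -/
def HasCycle (E : Finset (Finset V)) : Prop :=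
  ∃ (p : ℕ) (hp : 2 ≤ p) (u : Fin p → V) (e : Fin p → Finset V),
    Function.Injective u ∧ Function.Injective e ∧
    (∀ i, e i ∈ E) ∧ (∀ i : Fin p, u i ∈ e i ∧ u (i + ⟨1, by omega⟩) ∈ e i)

/-- A k-uniform supertree: connected, acyclic, every edge of size k. -/
def IsSupertree (k : ℕ) (E : Finset (Finset V)) : Prop :=
  (∀ e ∈ E, e.card = k) ∧ HyperConnected E ∧ ¬ HasCycle E

/-- The Rayleigh quotient. -/
noncomputable def rayleigh (E : Finset (Finset V)) (f : V → ℝ) : ℝ :=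
  lapForm E f / ∑ v, (f v) ^ 2

/-- f vanishes on the boundary (the degree-one vertices). -/
def Vanishes (E : Finset (Finset V)) (f : V → ℝ) : Prop :=
  ∀ v, deg E v = 1 → f v = 0

/-- The first Dirichlet eigenvalue: infimum of Rayleigh quotients of nonzero
functions vanishing on the boundary. -/
noncomputable def firstEig (E : Finset (Finset V)) : ℝ :=
  sInf {r : ℝ | ∃ f : V → ℝ, f ≠ 0 ∧ Vanishes E f ∧ r = rayleigh E f}

/-- The first Dirichlet eigenfunction: normalized, vanishing on the boundary,
positive on interior vertices, and an eigenfunction of the first eigenvalue. -/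
noncomputable def IsFirstEigfun (E : Finset (Finset V)) (f : V → ℝ) : Prop :=
  (∑ v, (f v) ^ 2) = 1 ∧ Vanishes E f ∧ (∀ v, deg E v ≠ 1 → 0 < f v) ∧
  (∀ v, deg E v ≠ 1 → lap E f v = firstEig E * f v)

/-- The underlying simple graph of a hypergraph. -/
def toGraph (E : Finset (Finset V)) : SimpleGraph V where
  Adj u v := u ≠ v ∧ ∃ e ∈ E, u ∈ e ∧ v ∈ e
  symm := by
    constructor
    rintro u v ⟨h, e, he, hu, hv⟩
    exact ⟨h.symm, e, he, hv, hu⟩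
  loopless := by constructor; rintro u ⟨h, -⟩; exact h rfl

/-- The height of a vertex: distance to the root v0. -/
noncomputable def height (E : Finset (Finset V)) (v0 v : V) : ℕ := (toGraph E).dist v0 v

/-- Two hypergraphs have the same degree sequence. -/
def SameDegSeq (E E' : Finset (Finset V)) : Prop :=
  Multiset.map (deg E) Finset.univ.val = Multiset.map (deg E') Finset.univ.val

/-- The Faber–Krahn property: minimal first Dirichlet eigenvalue among all
k-uniform supertrees with the same degree sequence. -/
noncomputable def FKProperty (k : ℕ) (E : Finset (Finset V)) : Prop :=
  IsSupertree k E ∧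
  ∀ E' : Finset (Finset V), IsSupertree k E' → SameDegSeq E E' → firstEig E ≤ firstEig E'

/-- A spiral-like ordering (SLO-ordering) with root v0, encoded by an injective
rank function r; conditions (S1)–(S5). -/
def IsSLO (E : Finset (Finset V)) (v0 : V) (r : V → ℕ) : Prop :=
  Function.Injective r ∧ (∀ v, r v0 ≤ r v) ∧
  -- (S1)
  (∀ u v, r u < r v → height E v0 u ≤ height E v0 v) ∧
  -- (S2)
  (∀ u v u1 v1 : V, (toGraph E).Adj u u1 → height E v0 u1 = height E v0 u + 1 →
     (toGraph E).Adj v v1 → height E v0 v1 = height E v0 v + 1 →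
     r u < r v → r u1 < r v1) ∧
  -- (S3)
  (∀ u v, r u < r v → deg E u = 1 → deg E v = 1) ∧
  -- (S4): no vertex outside an edge lies between two non-minimal vertices of the edge
  (∀ e ∈ E, ∀ x ∈ e, ∀ y ∈ e, ∀ z : V, z ∉ e → r x < r z → r z < r y → ∀ w ∈ e, r x ≤ r w) ∧
  -- (S5)
  (∀ u v, deg E u ≠ 1 → deg E v ≠ 1 → r u < r v → deg E u ≤ deg E v)

/-- A supertree admitting an SLO-ordering. -/
def HasSLO (E : Finset (Finset V)) : Prop := ∃ (v0 : V) (r : V → ℕ), IsSLO E v0 r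

/-- Isomorphism of hypergraphs on the same vertex set. -/
def IsoHyper (E E' : Finset (Finset V)) : Prop :=
  ∃ σ : V ≃ V, E' = E.image (fun e => e.image σ)
/-
Expanding `D - A` edge by edge, an edge `e` of size `c ≥ 2` contributes
`(1/(c-1)) · Σ_{{i,j} ⊆ e} (f i - f j)²` to the quadratic form. Shifting `u` to `v` in `e` keeps
`c` and all pairs inside `e ∖ {u}`, and replaces each term `(f u - f w)²` by `(f v - f w)²`;
the difference of these two squares is `(f v - f u)(f v + f u - 2 f w)`.
-/

section

variable {α : Type*}

/-- `Σ_{{i,j} ⊆ e} (f i - f j)²`, written over ordered pairs: the diagonal terms vanish. -/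
noncomputable def edgeEnergy (e : Finset α) (f : α → ℝ) : ℝ :=
  ∑ i ∈ e, ∑ j ∈ e, (f i - f j) ^ 2 / 2

lemma edgeEnergy_eq (e : Finset α) (f : α → ℝ) :
    edgeEnergy e f = #e * ∑ i ∈ e, f i ^ 2 - (∑ i ∈ e, f i) ^ 2 := by
  have hexp : ∀ i j, (f i - f j) ^ 2 / 2 = f i ^ 2 / 2 + f j ^ 2 / 2 - f i * f j :=
    fun i j => by ring
  simp only [edgeEnergy, hexp, sum_add_distrib, sum_sub_distrib, sum_const, nsmul_eq_mul,
    sq (∑ i ∈ e, f i), sum_mul_sum, ← sum_div, ← mul_sum]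
  ring

lemma edgeEnergy_insert [DecidableEq α] {e : Finset α} {a : α} (ha : a ∉ e) (f : α → ℝ) :
    edgeEnergy (insert a e) f = edgeEnergy e f + ∑ w ∈ e, (f a - f w) ^ 2 := by
  have hsymm : ∀ w, (f w - f a) ^ 2 = (f a - f w) ^ 2 := fun w => by ring
  simp only [edgeEnergy, sum_insert ha, sub_self, hsymm, sum_add_distrib, ← sum_div]
  ring

lemma edgeEnergy_shift [DecidableEq α] {e : Finset α} {u v : α} (hu : u ∈ e) (hv : v ∉ e)
    (f : α → ℝ) :
    edgeEnergy (insert v (e.erase u)) f - edgeEnergy e f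
      = ∑ w ∈ e.erase u, (f v - f u) * (f v + f u - 2 * f w) := by
  nth_rw 2 [← insert_erase hu]
  rw [edgeEnergy_insert (fun h => hv (mem_of_mem_erase h)),
    edgeEnergy_insert (notMem_erase u e), add_sub_add_left_eq_sub, ← sum_sub_distrib]
  exact sum_congr rfl fun w _ => by ring

lemma card_insert_erase [DecidableEq α] {e : Finset α} {u v : α} (hu : u ∈ e) (hv : v ∉ e) :
    #(insert v (e.erase u)) = #e := by
  rw [card_insert_of_notMem (fun h => hv (mem_of_mem_erase h)), card_erase_add_one hu]

lemma injOn_insert_erase [DecidableEq α] {F : Finset (Finset α)} {u v : α}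
    (hu : ∀ e ∈ F, u ∈ e) (hv : ∀ e ∈ F, v ∉ e) : Set.InjOn (fun e => insert v (e.erase u)) (F : Set (Finset α)) := by
  intro a ha b hb hab
  have hva : v ∉ a.erase u := fun h => hv a ha (mem_of_mem_erase h)
  have hvb : v ∉ b.erase u := fun h => hv b hb (mem_of_mem_erase h)
  have hrest : a.erase u = b.erase u := by
    simpa only [erase_insert hva, erase_insert hvb] using congrArg (·.erase v) hab
  rw [← insert_erase (hu a ha), hrest, insert_erase (hu b hb)]

lemma sum_sdiff_union_image_sub [DecidableEq α] {M : Type*} [AddCommGroup M]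
    {E F : Finset α} {σ : α → α} (hF : F ⊆ E) (hσ : Set.InjOn σ F) (hσE : ∀ e ∈ F, σ e ∉ E) (g : α → M) :
    ∑ e ∈ (E \ F) ∪ F.image σ, g e - ∑ e ∈ E, g e = ∑ e ∈ F, (g (σ e) - g e) := by
  have hdisj : Disjoint (E \ F) (F.image σ) := by
    simp only [disjoint_left, mem_sdiff, mem_image, not_exists, not_and]
    rintro _ ⟨hE, -⟩ e he rfl
    exact hσE e he hE
  rw [sum_union hdisj, sum_image hσ, ← sum_sdiff hF, sum_sub_distrib]
  abel

lemma sum_sum_erase_mul [DecidableEq α] (s : Finset α) (f : α → ℝ) :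
    ∑ i ∈ s, ∑ j ∈ s.erase i, f i * f j = (∑ i ∈ s, f i) ^ 2 - ∑ i ∈ s, f i ^ 2 := by
  rw [sq, sum_mul_sum, ← sum_sub_distrib]
  refine sum_congr rfl fun i hi => ?_
  rw [← add_sum_erase s (fun j => f i * f j) hi]
  ring

end

lemma sum_deg_mul (E : Finset (Finset V)) (g : V → ℝ) :
    ∑ i, (deg E i : ℝ) * g i = ∑ e ∈ E, ∑ i ∈ e, g i := by
  simp only [deg, card_eq_sum_ones, Nat.cast_sum, sum_mul, sum_filter]
  rw [sum_comm]
  simp only [Nat.cast_ite, Nat.cast_one, Nat.cast_zero, ite_mul, one_mul, zero_mul, ← sum_filter,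
    filter_mem_eq_inter, univ_inter]

lemma sum_adjMat_mul (E : Finset (Finset V)) (f : V → ℝ) :
    ∑ i, (∑ j, adjMat E i j * f j) * f i
      = ∑ e ∈ E, 1 / ((#e : ℝ) - 1) * ((∑ i ∈ e, f i) ^ 2 - ∑ i ∈ e, f i ^ 2) := by
  have hA : ∀ i j, adjMat E i j
      = ∑ e ∈ E, if i ∈ e ∧ j ∈ e.erase i then 1 / ((#e : ℝ) - 1) else 0 := by
    intro i j
    by_cases hij : i = j
    · simp [adjMat, hij]
    · simp [adjMat, hij, sum_filter, Ne.symm hij]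
  simp only [hA, sum_mul]
  rw [sum_congr rfl fun i _ => sum_comm, sum_comm]
  refine sum_congr rfl fun e _ => ?_
  simp only [ite_and, ite_mul, zero_mul, sum_ite_irrel, sum_const_zero, sum_ite_mem, univ_inter,
    ← sum_sum_erase_mul, mul_sum]
  exact sum_congr rfl fun i _ => sum_congr rfl fun j _ => by ring

lemma lapForm_eq_sum_edges (E : Finset (Finset V)) (f : V → ℝ) :
    lapForm E f = ∑ e ∈ E,
      (∑ i ∈ e, f i ^ 2 - 1 / ((#e : ℝ) - 1) * ((∑ i ∈ e, f i) ^ 2 - ∑ i ∈ e, f i ^ 2)) := by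
  simp only [lapForm, lap, sub_mul, sum_sub_distrib, mul_assoc, ← sq, sum_deg_mul, sum_adjMat_mul]

lemma lapForm_eq_sum_edgeEnergy {E : Finset (Finset V)} (hE : ∀ e ∈ E, #e ≠ 1) (f : V → ℝ) :
    lapForm E f = ∑ e ∈ E, edgeEnergy e f / (#e - 1) := by
  rw [lapForm_eq_sum_edges]
  refine sum_congr rfl fun e he => ?_
  have hc : (#e : ℝ) - 1 ≠ 0 := sub_ne_zero.mpr (by exact_mod_cast hE e he)
  rw [edgeEnergy_eq]
  field_simp
  ring

lemma lapForm_eq_sum_edgeEnergy_of_uniform {k : ℕ} (hk : k ≠ 1) {E : Finset (Finset V)}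
    (hE : ∀ e ∈ E, #e = k) (f : V → ℝ) :
    lapForm E f = (∑ e ∈ E, edgeEnergy e f) / (k - 1) := by
  rw [lapForm_eq_sum_edgeEnergy (fun e he => hE e he ▸ hk), sum_div]
  exact sum_congr rfl fun e he => by rw [hE e he]

/-- the shifting identity. Replacing each edge e ∈ F (all
containing u, none containing x) by (e∖{u})∪{x} changes the quadratic form by
(1/(k-1))·Σ_{e∈F} Σ_{w∈e∖{u}} (f(x)-f(u))(f(x)+f(u)-2f(w)). -/
theorem shifting_identity (k : ℕ) (hk : 2 ≤ k)
    (E : Finset (Finset V)) (hu : ∀ e ∈ E, e.card = k)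
    (F : Finset (Finset V)) (hF : F ⊆ E) (u x : V)
    (huF : ∀ e ∈ F, u ∈ e) (hxF : ∀ e ∈ F, x ∉ e)
    (hnew : ∀ e ∈ F, insert x (e.erase u) ∉ E)
    (f : V → ℝ) :
    lapForm ((E \ F) ∪ F.image (fun e => insert x (e.erase u))) f - lapForm E f
      = (1 / ((k : ℝ) - 1)) * ∑ e ∈ F, ∑ w ∈ e.erase u,
          (f x - f u) * (f x + f u - 2 * f w) := by
  have hk1 : k ≠ 1 := by omega
  have hu' : ∀ e ∈ (E \ F) ∪ F.image (fun e => insert x (e.erase u)), #e = k := by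
    simp only [mem_union, mem_sdiff, mem_image]
    rintro _ (⟨he, -⟩ | ⟨e, he, rfl⟩)
    · exact hu _ he
    · rw [card_insert_erase (huF e he) (hxF e he), hu e (hF he)]
  rw [lapForm_eq_sum_edgeEnergy_of_uniform hk1 hu', lapForm_eq_sum_edgeEnergy_of_uniform hk1 hu,
    ← sub_div, sum_sdiff_union_image_sub hF (injOn_insert_erase huF hxF) hnew, one_div_mul_eq_div]
  congr 1
  exact sum_congr rfl fun e he => edgeEnergy_shift (huF e he) (hxF e he) f
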